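/- Suppose Φ(z) = Σ_{n=0}^∞ d_n u_n(z) with u_n(z) = z^n F^(n)(z) for F = ₂F₁(α,β;γ;z), and Φ satisfies the general Heun equation with parameters (a, q; α, β, γ, δ, ε), γ+δ+ε = α+β+1. Then the coefficients satisfy R_n d_n + Q_{n-1} d_{n-1} + P_{n-2} d_{n-2} = 0 with R_n = a n(n+α-1)(n+β-1), Q_n = a(n+α)(n+β) + (a-1)n(n+ε-1) - γn - q, P_n = (a-1)(n+ε). -/

import Mathlib

open PowerSeries Finset

/-- The Pochhammer symbol `(a)_k = a(a+1)⋯(a+k-1)`. -/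
noncomputable def poch (a : ℂ) (k : ℕ) : ℂ := (ascPochhammer ℂ k).eval a

/-- The Gauss hypergeometric series `₂F₁(α, β; γ; z)` as a formal power series. -/
noncomputable def gauss (α β γ : ℂ) : PowerSeries ℂ :=
  PowerSeries.mk fun k => poch α k * poch β k / (poch γ k * (k.factorial : ℂ))

/-- `u_n(z) = z^n (dⁿ/dzⁿ) ₂F₁(α, β; γ; z)` as a formal power series. -/
noncomputable def gaussU (α β γ : ℂ) (n : ℕ) : PowerSeries ℂ :=
  X ^ n * (fun f => derivative ℂ f)^[n] (gauss α β γ)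

/-!
Writing `H` for the Heun operator, the heart of the matter is the identity
`H u_n = R_n u_{n-1} + Q_n u_n + P_n u_{n+1}` (with `R_0 = 0`). It is checked coefficientwise:
the `k`-th coefficient of `u_n` is `f_k k^{(n)}`, where `f_k` are the Gauss coefficients and
`k^{(n)} = k(k-1)⋯(k-n+1)`, and the ratio `f_{k+1}/f_k = (k+α)(k+β)/((k+1)(k+γ))` turns the
`k`-th coefficient of `H u_n` into `f_k` times a polynomial identity in `k`.
Summing over `n`, the `k`-th coefficient of `H Φ` is `f_k Σ_m E_m k^{(m-1)}`, where `E_m` is the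
left-hand side of the recurrence. After dividing by `f_k ≠ 0` these equations are triangular
(`k^{(m-1)}` vanishes for `m > k + 1` and `k^{(k)} = k!`), so every `E_m` vanishes.
-/

section General

variable {R : Type*}

lemma descPochhammer_eval_natCast_of_lt [Ring R] {k n : ℕ} (h : k < n) :
    (descPochhammer R n).eval (k : R) = 0 := by
  rw [descPochhammer_eval_eq_descFactorial, Nat.descFactorial_of_lt h, Nat.cast_zero]

lemma eq_zero_of_sum_range_mul_descPochhammer_eq_zero [Ring R] [NoZeroDivisors R] [CharZero R]
    {E : ℕ → R} (h0 : E 0 = 0)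
    (h : ∀ k : ℕ, ∑ m ∈ range (k + 2), E m * (descPochhammer R (m - 1)).eval (k : R) = 0)
    (m : ℕ) : E m = 0 := by
  induction m using Nat.strong_induction_on with
  | _ m ih =>
    cases m with
    | zero => exact h0
    | succ k =>
      have hk := h k
      rw [sum_range_succ, sum_eq_zero fun j hj => by rw [ih j (mem_range.1 hj), zero_mul],
        zero_add, Nat.add_sub_cancel, descPochhammer_eval_eq_descFactorial,
        Nat.descFactorial_self] at hk
      exact (mul_eq_zero.1 hk).resolve_right (Nat.cast_ne_zero.2 k.factorial_ne_zero)

lemma coeff_X_mul_derivative [CommRing R] (φ : R⟦X⟧) (k : ℕ) :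
    coeff k (X * derivative R φ) = k * coeff k φ := by
  cases k with
  | zero => simp
  | succ k => rw [coeff_succ_X_mul, coeff_derivative]; push_cast; ring

lemma coeff_X_mul_X_mul_derivative_derivative [CommRing R] (φ : R⟦X⟧) (k : ℕ) :
    coeff k (X * (X * derivative R (derivative R φ))) = k * (k - 1) * coeff k φ := by
  cases k with
  | zero => simp
  | succ k =>
    rw [coeff_succ_X_mul, coeff_X_mul_derivative, coeff_derivative]
    push_cast
    ring

lemma sum_range_coeff_X_mul_mul [Semiring R] (g : R⟦X⟧) (w : ℕ → R) {N : ℕ} (hw : w N = 0) :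
    ∑ m ∈ range N, coeff m (X * g) * w m = ∑ n ∈ range N, coeff n g * w (n + 1) := by
  rw [← add_zero (∑ m ∈ range N, _), ← mul_zero (coeff N (X * g)), ← hw, ← sum_range_succ,
    sum_range_succ', coeff_zero_X_mul, zero_mul, add_zero]
  simp only [coeff_succ_X_mul]

lemma sum_range_coeff_three_term_mul [Semiring R] (r s t w : ℕ → R) {N : ℕ}
    (hN : w N = 0) (hN' : w (N + 1) = 0) :
    ∑ m ∈ range N, coeff m (PowerSeries.mk r + X * PowerSeries.mk s + X ^ 2 * PowerSeries.mk t)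
        * w m
      = ∑ n ∈ range N, (r n * w n + s n * w (n + 1) + t n * w (n + 2)) := by
  simp only [map_add, add_mul, sum_add_distrib, pow_two, mul_assoc]
  rw [sum_range_coeff_X_mul_mul _ _ hN, sum_range_coeff_X_mul_mul _ _ hN,
    sum_range_coeff_X_mul_mul _ (fun n => w (n + 1)) hN']
  simp only [coeff_mk]

end General

section Gauss

variable {α β γ : ℂ}

lemma poch_ne_zero {x : ℂ} (hx : ∀ m : ℕ, x ≠ -(m : ℂ)) (k : ℕ) : poch x k ≠ 0 := by
  rw [poch, Ne, ascPochhammer_eval_eq_zero_iff]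
  rintro ⟨m, -, hm⟩
  exact hx m (by linear_combination hm)

lemma coeff_zero_gauss : coeff 0 (gauss α β γ) = 1 := by
  simp [gauss, poch]

lemma coeff_gauss_ne_zero (hα : ∀ m : ℕ, α ≠ -(m : ℂ)) (hβ : ∀ m : ℕ, β ≠ -(m : ℂ))
    (hγ : ∀ m : ℕ, γ ≠ -(m : ℂ)) (k : ℕ) : coeff k (gauss α β γ) ≠ 0 := by
  rw [gauss, coeff_mk]
  exact div_ne_zero (mul_ne_zero (poch_ne_zero hα k) (poch_ne_zero hβ k))
    (mul_ne_zero (poch_ne_zero hγ k) (Nat.cast_ne_zero.2 k.factorial_ne_zero))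

lemma coeff_succ_gauss_mul (hγ : ∀ m : ℕ, γ ≠ -(m : ℂ)) (k : ℕ) :
    coeff (k + 1) (gauss α β γ) * ((k + 1) * (k + γ))
      = coeff k (gauss α β γ) * ((k + α) * (k + β)) := by
  have hγk : γ + k ≠ 0 := fun h => hγ k (by linear_combination h)
  have hk : (k : ℂ) + 1 ≠ 0 := by exact_mod_cast k.succ_ne_zero
  have := poch_ne_zero hγ k
  have := Nat.cast_ne_zero (R := ℂ) |>.2 k.factorial_ne_zero
  simp only [gauss, coeff_mk, poch, ascPochhammer_succ_eval, Nat.factorial_succ] at *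
  push_cast
  field_simp
  ring

lemma coeff_gaussU (α β γ : ℂ) (n k : ℕ) :
    coeff k (gaussU α β γ n) = coeff k (gauss α β γ) * (descPochhammer ℂ n).eval (k : ℂ) := by
  rcases le_or_gt n k with h | h
  · obtain ⟨m, rfl⟩ := Nat.exists_eq_add_of_le' h
    rw [gaussU, coeff_X_pow_mul, coeff_iterate_derivative, descPochhammer_eval_eq_descFactorial,
      ← Nat.add_descFactorial_eq_ascFactorial]
    ring
  · rw [gaussU, coeff_X_pow_mul', if_neg h.not_ge, descPochhammer_eval_natCast_of_lt h, mul_zero]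

end Gauss

noncomputable def gaussExpansion (α β γ : ℂ) (d : ℕ → ℂ) : ℂ⟦X⟧ :=
  PowerSeries.mk fun k => ∑ n ∈ range (k + 1), d n * coeff k (gaussU α β γ n)

noncomputable def heunOp (a q α β γ δ ε : ℂ) : ℂ⟦X⟧ →ₗ[ℂ] ℂ⟦X⟧ where
  toFun φ := X * (X - 1) * (X - C a) * derivative ℂ (derivative ℂ φ)
    + (C γ * (X - 1) * (X - C a) + C δ * X * (X - C a) + C ε * X * (X - 1)) * derivative ℂ φ
    + (C (α * β) * X - C q) * φ
  map_add' φ ψ := by simp only [map_add]; ring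
  map_smul' c φ := by
    simp only [Derivation.map_smul, RingHom.id_apply]
    simp only [smul_eq_C_mul]
    ring

noncomputable def heunR (a α β : ℂ) (n : ℕ) : ℂ := a * n * (n + α - 1) * (n + β - 1)

noncomputable def heunQ (a q α β γ ε : ℂ) (n : ℕ) : ℂ :=
  a * (n + α) * (n + β) + (a - 1) * n * (n + ε - 1) - γ * n - q

noncomputable def heunP (a ε : ℂ) (n : ℕ) : ℂ := (a - 1) * (n + ε)

/-- Its `m`-th coefficient is `R_m d_m + Q_{m-1} d_{m-1} + P_{m-2} d_{m-2}`, terms with a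
negative index being omitted. -/
noncomputable def heunRecurrence (a q α β γ ε : ℂ) (d : ℕ → ℂ) : ℂ⟦X⟧ :=
  PowerSeries.mk (fun n => heunR a α β n * d n)
    + X * PowerSeries.mk (fun n => heunQ a q α β γ ε n * d n)
    + X ^ 2 * PowerSeries.mk (fun n => heunP a ε n * d n)

section Heun

variable {a q α β γ δ ε : ℂ}

lemma heunOp_apply_eq (φ : ℂ⟦X⟧) : heunOp a q α β γ δ ε φ =
    X * (X * (X * derivative ℂ (derivative ℂ φ)))
      - (1 + a) • (X * (X * derivative ℂ (derivative ℂ φ)))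
      + a • (X * derivative ℂ (derivative ℂ φ))
      + (γ + δ + ε) • (X * (X * derivative ℂ φ))
      - (γ * (1 + a) + δ * a + ε) • (X * derivative ℂ φ)
      + (γ * a) • derivative ℂ φ + (α * β) • (X * φ) - q • φ := by
  simp only [heunOp, LinearMap.coe_mk, AddHom.coe_mk, smul_eq_C_mul, map_add, map_mul, map_one]
  ring

lemma coeff_zero_heunOp (φ : ℂ⟦X⟧) :
    coeff 0 (heunOp a q α β γ δ ε φ) = a * γ * coeff 1 φ - q * coeff 0 φ := by
  simp only [heunOp_apply_eq, map_add, map_sub, coeff_smul, coeff_zero_X_mul, coeff_derivative]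
  push_cast
  ring

lemma coeff_succ_heunOp (φ : ℂ⟦X⟧) (k : ℕ) :
    coeff (k + 1) (heunOp a q α β γ δ ε φ) =
      a * (k + 2) * (k + 1 + γ) * coeff (k + 2) φ
        - ((1 + a) * (k + 1) * k + (γ * (1 + a) + δ * a + ε) * (k + 1) + q) * coeff (k + 1) φ
        + (k * (k - 1) + (γ + δ + ε) * k + α * β) * coeff k φ := by
  simp only [heunOp_apply_eq, map_add, map_sub, coeff_smul, coeff_succ_X_mul,
    coeff_X_mul_X_mul_derivative_derivative, coeff_X_mul_derivative, coeff_derivative]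
  push_cast
  ring

lemma coeff_heunOp_congr {φ ψ : ℂ⟦X⟧} {k : ℕ} (h : ∀ j ≤ k + 1, coeff j φ = coeff j ψ) :
    coeff k (heunOp a q α β γ δ ε φ) = coeff k (heunOp a q α β γ δ ε ψ) := by
  cases k with
  | zero => simp only [coeff_zero_heunOp, h 0 (by omega), h 1 le_rfl]
  | succ k => simp only [coeff_succ_heunOp, h k (by omega), h (k + 1) (by omega), h (k + 2) le_rfl]

/-- At `k = 0` the junk value `v (-1)` is multiplied by `0`. -/
lemma coeff_heunOp_of_coeff_eq_gauss_mul (hfuchs : γ + δ + ε = α + β + 1)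
    (hγ : ∀ m : ℕ, γ ≠ -(m : ℂ)) {φ : ℂ⟦X⟧} (v : ℂ → ℂ)
    (hφ : ∀ j : ℕ, coeff j φ = coeff j (gauss α β γ) * v j) (k : ℕ) :
    coeff k (heunOp a q α β γ δ ε φ) = coeff k (gauss α β γ) *
      (a * (k + α) * (k + β) * v (k + 1)
        - ((1 + a) * k * (k - 1) + (γ * (1 + a) + δ * a + ε) * k + q) * v k
        + k * (k - 1 + γ) * v (k - 1)) := by
  cases k with
  | zero =>
    have h0 := coeff_succ_gauss_mul (α := α) (β := β) hγ 0
    rw [coeff_zero_heunOp, hφ, hφ, coeff_zero_gauss] at *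
    simp only [Nat.cast_zero, Nat.cast_one, zero_add] at *
    linear_combination a * v 1 * h0
  | succ k =>
    have h0 := coeff_succ_gauss_mul (α := α) (β := β) hγ k
    have h1 := coeff_succ_gauss_mul (α := α) (β := β) hγ (k + 1)
    rw [coeff_succ_heunOp, hφ, hφ, hφ]
    push_cast at *
    rw [show (k : ℂ) + 2 = k + 1 + 1 by ring, add_sub_cancel_right]
    linear_combination a * v (k + 1 + 1) * h1 - v k * h0 + k * coeff k (gauss α β γ) * v k * hfuchs

lemma descPochhammer_eval_heun (hfuchs : γ + δ + ε = α + β + 1) (n : ℕ) (x : ℂ) :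
    a * (x + α) * (x + β) * (descPochhammer ℂ n).eval (x + 1)
      - ((1 + a) * x * (x - 1) + (γ * (1 + a) + δ * a + ε) * x + q) * (descPochhammer ℂ n).eval x
      + x * (x - 1 + γ) * (descPochhammer ℂ n).eval (x - 1)
    = heunR a α β n * (descPochhammer ℂ (n - 1)).eval x
      + heunQ a q α β γ ε n * (descPochhammer ℂ n).eval x
      + heunP a ε n * (descPochhammer ℂ (n + 1)).eval x := by
  obtain rfl : δ = α + β + 1 - γ - ε := by linear_combination hfuchs
  simp only [heunR, heunQ, heunP]
  cases n with
  | zero =>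
    simp only [zero_add, descPochhammer_zero, descPochhammer_one, Polynomial.eval_one,
      Polynomial.eval_X]
    push_cast
    ring
  | succ m =>
    have shift (y : ℂ) :
        (descPochhammer ℂ (m + 1)).eval y = y * (descPochhammer ℂ m).eval (y - 1) := by
      simp [descPochhammer_succ_left]
    have hAB := (shift x).symm.trans (descPochhammer_succ_eval m x)
    have h1 : (descPochhammer ℂ (m + 1)).eval (x + 1) = (x + 1) * (descPochhammer ℂ m).eval x := by
      rw [shift, add_sub_cancel_right]
    have h2 : (descPochhammer ℂ (m + 1 + 1)).eval x
        = x * (descPochhammer ℂ m).eval (x - 1) * (x - (m + 1)) := by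
      rw [descPochhammer_succ_eval, shift]
      push_cast
      ring
    rw [h1, shift x, descPochhammer_succ_eval m (x - 1), h2, Nat.add_sub_cancel]
    push_cast
    linear_combination
      (-((1 + a) * x * (x - 1) + (γ * (1 + a) + (α + β + 1 - γ - ε) * a + ε) * x + q)
      + (x - 1 + γ) * (x - 1 - m)
      - (a * (m + 1 + α) * (m + 1 + β) + (a - 1) * (m + 1) * (m + 1 + ε - 1) - γ * (m + 1) - q)
      - (a - 1) * (m + 1 + ε) * (x - m - 1)) * hAB

lemma heunOp_gaussU (hfuchs : γ + δ + ε = α + β + 1) (hγ : ∀ m : ℕ, γ ≠ -(m : ℂ)) (n : ℕ) :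
    heunOp a q α β γ δ ε (gaussU α β γ n) = heunR a α β n • gaussU α β γ (n - 1)
      + heunQ a q α β γ ε n • gaussU α β γ n + heunP a ε n • gaussU α β γ (n + 1) := by
  ext k
  rw [coeff_heunOp_of_coeff_eq_gauss_mul hfuchs hγ (descPochhammer ℂ n).eval
    (coeff_gaussU α β γ n), descPochhammer_eval_heun hfuchs]
  simp only [map_add, coeff_smul, coeff_gaussU, smul_eq_mul]
  ring

end Heun

section Recurrence

variable (a q α β γ ε : ℂ) (d : ℕ → ℂ)

lemma coeff_zero_heunRecurrence : coeff 0 (heunRecurrence a q α β γ ε d) = 0 := by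
  simp [heunRecurrence, heunR]

lemma coeff_one_heunRecurrence : coeff 1 (heunRecurrence a q α β γ ε d)
    = heunR a α β 1 * d 1 + heunQ a q α β γ ε 0 * d 0 := by
  simp [heunRecurrence, coeff_X_pow_mul']

lemma coeff_add_two_heunRecurrence (n : ℕ) : coeff (n + 2) (heunRecurrence a q α β γ ε d)
    = heunR a α β (n + 2) * d (n + 2) + heunQ a q α β γ ε (n + 1) * d (n + 1)
      + heunP a ε n * d n := by
  simp [heunRecurrence, coeff_X_pow_mul', coeff_succ_X_mul]

end Recurrence

section Expansion

variable {a q α β γ δ ε : ℂ} {d : ℕ → ℂ}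

lemma coeff_gaussExpansion {N j : ℕ} (hj : j < N) :
    coeff j (gaussExpansion α β γ d) = coeff j (∑ n ∈ range N, d n • gaussU α β γ n) := by
  simp only [gaussExpansion, coeff_mk, map_sum, coeff_smul, smul_eq_mul]
  refine sum_subset (range_subset_range.2 hj) fun n _ hnj => ?_
  rw [coeff_gaussU, descPochhammer_eval_natCast_of_lt (by simpa using hnj), mul_zero, mul_zero]

lemma sum_coeff_heunRecurrence_mul_eq_zero (hfuchs : γ + δ + ε = α + β + 1)
    (hα : ∀ m : ℕ, α ≠ -(m : ℂ)) (hβ : ∀ m : ℕ, β ≠ -(m : ℂ)) (hγ : ∀ m : ℕ, γ ≠ -(m : ℂ))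
    (hheun : heunOp a q α β γ δ ε (gaussExpansion α β γ d) = 0) (k : ℕ) :
    ∑ m ∈ range (k + 2), coeff m (heunRecurrence a q α β γ ε d)
      * (descPochhammer ℂ (m - 1)).eval (k : ℂ) = 0 := by
  have htrunc : coeff k (heunOp a q α β γ δ ε (gaussExpansion α β γ d))
      = coeff k (heunOp a q α β γ δ ε (∑ n ∈ range (k + 2), d n • gaussU α β γ n)) :=
    coeff_heunOp_congr fun j hj => coeff_gaussExpansion (by omega)
  rw [hheun, map_zero, map_sum] at htrunc
  simp only [map_smul, heunOp_gaussU hfuchs hγ, smul_add, map_sum, map_add,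
    coeff_gaussU, smul_eq_mul] at htrunc
  rw [heunRecurrence, sum_range_coeff_three_term_mul]
  · refine mul_left_cancel₀ (coeff_gauss_ne_zero hα hβ hγ k) ?_
    rw [mul_sum, mul_zero, htrunc]
    refine sum_congr rfl fun n _ => ?_
    rw [Nat.add_sub_cancel, show n + 2 - 1 = n + 1 by omega]
    ring
  · exact descPochhammer_eval_natCast_of_lt (by omega)
  · exact descPochhammer_eval_natCast_of_lt (by omega)

end Expansion

theorem heun_expansion_gaussU_recurrence_general
    (a q α β γ δ ε : ℂ)
    (hfuchs : γ + δ + ε = α + β + 1)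
    (hγ : ∀ m : ℕ, γ ≠ -(m : ℂ)) (hα : ∀ m : ℕ, α ≠ -(m : ℂ))
    (hβ : ∀ m : ℕ, β ≠ -(m : ℂ))
    (d : ℕ → ℂ) (Φ : PowerSeries ℂ)
    (hΦ : Φ = PowerSeries.mk fun k =>
      ∑ n ∈ Finset.range (k + 1), d n * PowerSeries.coeff k (gaussU α β γ n))
    (hheun : X * (X - 1) * (X - C a) * derivative ℂ (derivative ℂ Φ)
      + (C γ * (X - 1) * (X - C a) + C δ * X * (X - C a)
          + C ε * X * (X - 1)) * derivative ℂ Φ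
      + (C (α * β) * X - C q) * Φ = 0)
    (R Q P : ℕ → ℂ)
    (hR : ∀ n : ℕ, R n = a * n * (n + α - 1) * (n + β - 1))
    (hQ : ∀ n : ℕ, Q n = a * (n + α) * (n + β) + (a - 1) * n * (n + ε - 1) - γ * n - q)
    (hP : ∀ n : ℕ, P n = (a - 1) * (n + ε)) :
    R 1 * d 1 + Q 0 * d 0 = 0 ∧
      ∀ n : ℕ, R (n + 2) * d (n + 2) + Q (n + 1) * d (n + 1) + P n * d n = 0 := by
  obtain rfl : R = heunR a α β := funext hR
  obtain rfl : Q = heunQ a q α β γ ε := funext hQ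
  obtain rfl : P = heunP a ε := funext hP
  subst hΦ
  have hrec : heunRecurrence a q α β γ ε d = 0 := by
    ext m
    exact eq_zero_of_sum_range_mul_descPochhammer_eq_zero (coeff_zero_heunRecurrence ..)
      (sum_coeff_heunRecurrence_mul_eq_zero hfuchs hα hβ hγ hheun) m
  refine ⟨?_, fun n => ?_⟩
  · simpa [coeff_one_heunRecurrence] using congrArg (coeff 1) hrec
  · simpa [coeff_add_two_heunRecurrence] using congrArg (coeff (n + 2)) hrec

/-- Suppose `Φ = Σ_{n≥0} d_n u_n` (a well-defined formal series since
`u_n` has order `≥ n`) satisfies the general Heun equation with parameters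
`(a, q; α, β, γ, δ, ε)`, `γ+δ+ε = α+β+1` (stated with denominators cleared by
`z(z-1)(z-a)`). Then the coefficients satisfy the three-term recurrence
`R_n d_n + Q_{n-1} d_{n-1} + P_{n-2} d_{n-2} = 0` with `R_n = an(n+α-1)(n+β-1)`,
`Q_n = a(n+α)(n+β) + (a-1)n(n+ε-1) - γn - q`, `P_n = (a-1)(n+ε)`. -/
theorem heun_expansion_gaussU_recurrence
    (a q α β γ δ ε : ℂ) (ha0 : a ≠ 0) (ha1 : a ≠ 1)
    (hfuchs : γ + δ + ε = α + β + 1)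
    (hγ : ∀ m : ℕ, γ ≠ -(m : ℂ)) (hα : ∀ m : ℕ, α ≠ -(m : ℂ))
    (hβ : ∀ m : ℕ, β ≠ -(m : ℂ))
    (d : ℕ → ℂ) (Φ : PowerSeries ℂ)
    (hΦ : Φ = PowerSeries.mk fun k =>
      ∑ n ∈ Finset.range (k + 1), d n * PowerSeries.coeff k (gaussU α β γ n))
    (hheun : X * (X - 1) * (X - C a) * derivative ℂ (derivative ℂ Φ)
      + (C γ * (X - 1) * (X - C a) + C δ * X * (X - C a)
          + C ε * X * (X - 1)) * derivative ℂ Φ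
      + (C (α * β) * X - C q) * Φ = 0)
    (R Q P : ℕ → ℂ)
    (hR : ∀ n : ℕ, R n = a * n * (n + α - 1) * (n + β - 1))
    (hQ : ∀ n : ℕ, Q n = a * (n + α) * (n + β) + (a - 1) * n * (n + ε - 1) - γ * n - q)
    (hP : ∀ n : ℕ, P n = (a - 1) * (n + ε)) :
    R 1 * d 1 + Q 0 * d 0 = 0 ∧
      ∀ n : ℕ, R (n + 2) * d (n + 2) + Q (n + 1) * d (n + 1) + P n * d n = 0 :=
  heun_expansion_gaussU_recurrence_general a q α β γ δ ε hfuchs hγ hα hβ d Φ hΦ hheun R Q P hR hQ hP
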